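/- arXiv:1709.10412 — 4 statements merged into one kernel-verified Lean document; each statement's English description precedes it below -/
import Mathlib

section
/- Let N ≥ 1. Let μ be the infinite product over the index set ℕ of the uniform probability measure on Fin N, and for ω : ℕ → Fin N let T(ω) be the least r : ℕ such that every p : Fin N equals ω j for some j < r (the covering time). Then the expectation of T satisfies ∫ T dμ ≤ N · (1 + Real.log N). -/
/-!
By the union bound over the `N` points, the covering time `T` exceeds `r` with probability at
most `min (1, N (1 - 1/N)^r)`. Summing the tail probabilities, `E T ≤ k + N (1 - 1/N)^k · N ≤ k + N` as soon as `N (1 - 1/N)^k ≤ 1`, and such a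
`k ≤ N log N` exists: for `N ≥ 9` take `k = ⌊N log N⌋` and use `log (1 - x) ≤ -x - x²/2`; the
cases `N < 9` are checked numerically. The Bochner integral is bounded through
`‖∫ f‖ₑ ≤ ∫⁻ ‖f‖ₑ`, so no measurability of `T` is needed.
-/

open MeasureTheory Finset Real
open scoped ENNReal

theorem Real.log_one_sub_le {x : ℝ} (hx₀ : 0 ≤ x) (hx₁ : x < 1) :
    log (1 - x) ≤ -x - x ^ 2 / 2 := by
  have hsum := hasSum_pow_div_log_of_abs_lt_one (abs_lt.2 ⟨by linarith, hx₁⟩)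
  have h2 := sum_le_hasSum (range 2) (fun n _ ↦ by positivity) hsum
  norm_num [sum_range_succ] at h2
  linarith

-- `2.7182818286 > e`, so this reduces `k ≤ N log N` to an inequality between numerals.
theorem natCast_le_mul_log_of_pow_le {k N : ℕ} (h : (2.7182818286 : ℝ) ^ k ≤ (N : ℝ) ^ N) :
    (k : ℝ) ≤ N * log N := by
  have hN : 0 < (N : ℝ) ^ N := (pow_pos (by norm_num) k).trans_le h
  rw [← log_pow, le_log_iff_exp_le hN, ← exp_one_pow]
  exact (pow_le_pow_left₀ (exp_pos 1).le exp_one_lt_d9.le k).trans h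

theorem one_sub_inv_pow_floor_mul_log_le {N : ℕ} (hN : 9 ≤ N) :
    (1 - (N : ℝ)⁻¹) ^ ⌊N * log N⌋₊ ≤ (N : ℝ)⁻¹ := by
  set x : ℝ := (N : ℝ)⁻¹
  set L := log N
  set k := ⌊N * L⌋₊
  have hN₀ : (0 : ℝ) < N := by positivity
  have hNx : N * x = 1 := mul_inv_cancel₀ hN₀.ne'
  have hx₀ : 0 < x := by positivity
  have hx : x ≤ 1 / 9 := by
    rw [one_div]; exact inv_anti₀ (by norm_num) (by exact_mod_cast hN)
  -- `log 9 > 19/9`: this is where the threshold `9` comes from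
  have hL : 2 + x ≤ L := by
    have h9 : (9 : ℝ) * (19 / 9) ≤ 9 * log 9 := by
      norm_num; exact_mod_cast natCast_le_mul_log_of_pow_le (k := 19) (N := 9) (by norm_num)
    have : log 9 ≤ L := log_le_log (by norm_num) (by exact_mod_cast hN)
    linarith
  have hk : N * L - 1 ≤ k := (Nat.sub_one_lt_floor _).le
  have hlog := log_one_sub_le hx₀.le (by linarith)
  have hklog : k * log (1 - x) ≤ -L :=
    calc k * log (1 - x) ≤ (N * L - 1) * (-x - x ^ 2 / 2) := by
          have : 0 ≤ N * L - 1 := by nlinarith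
          nlinarith
      _ = -L - x * (L - 2 - x) / 2 := by linear_combination (-L - L * x / 2) * hNx
      _ ≤ -L := by nlinarith
  have h1x : 0 < 1 - x := by linarith
  calc (1 - x) ^ k = exp (k * log (1 - x)) := by rw [← log_pow, exp_log (pow_pos h1x k)]
    _ ≤ exp (-L) := exp_le_exp.2 hklog
    _ = x := by rw [exp_neg, exp_log hN₀]

theorem exists_le_mul_log_and_mul_one_sub_inv_pow_le {N : ℕ} (hN : 1 ≤ N) :
    ∃ k : ℕ, (k : ℝ) ≤ N * log N ∧ (N : ℝ) * (1 - (N : ℝ)⁻¹) ^ k ≤ 1 := by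
  rcases lt_or_ge N 9 with hsmall | hlarge
  · -- the witnesses are `⌊N log N⌋`
    interval_cases N
    · exact ⟨0, by norm_num, by norm_num⟩
    · exact ⟨1, natCast_le_mul_log_of_pow_le (by norm_num), by norm_num⟩
    · exact ⟨3, natCast_le_mul_log_of_pow_le (by norm_num), by norm_num⟩
    · exact ⟨5, natCast_le_mul_log_of_pow_le (by norm_num), by norm_num⟩
    · exact ⟨8, natCast_le_mul_log_of_pow_le (by norm_num), by norm_num⟩
    · exact ⟨10, natCast_le_mul_log_of_pow_le (by norm_num), by norm_num⟩
    · exact ⟨13, natCast_le_mul_log_of_pow_le (by norm_num), by norm_num⟩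
    · exact ⟨16, natCast_le_mul_log_of_pow_le (by norm_num), by norm_num⟩
  · refine ⟨⌊N * log N⌋₊, Nat.floor_le (by positivity), ?_⟩
    calc (N : ℝ) * (1 - (N : ℝ)⁻¹) ^ ⌊N * log N⌋₊ ≤ N * (N : ℝ)⁻¹ := by
          gcongr; exact one_sub_inv_pow_floor_mul_log_le hlarge
      _ = 1 := mul_inv_cancel₀ (by positivity)

theorem ENNReal.tsum_le_add_geometric {a : ℕ → ℝ≥0∞} {c q : ℝ≥0∞} (h₁ : ∀ r, a r ≤ 1)
    (hq : ∀ r, a r ≤ c * q ^ r) (k : ℕ) :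
    ∑' r, a r ≤ k + c * q ^ k * (1 - q)⁻¹ := by
  rw [← ENNReal.summable.sum_add_tsum_nat_add' (k := k), ← ENNReal.tsum_geometric,
    ← ENNReal.tsum_mul_left]
  gcongr with i
  · simpa using sum_le_card_nsmul (range k) a 1 fun r _ ↦ h₁ r
  · simpa [pow_add, mul_assoc, mul_comm] using hq (i + k)

theorem MeasureTheory.integral_le_of_lintegral_enorm_le {Ω : Type*} [MeasurableSpace Ω]
    {μ : Measure Ω} {f : Ω → ℝ} {B : ℝ} (hB : 0 ≤ B)
    (h : ∫⁻ ω, ‖f ω‖ₑ ∂μ ≤ ENNReal.ofReal B) : ∫ ω, f ω ∂μ ≤ B :=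
  (ENNReal.ofReal_le_ofReal_iff hB).1
    ((Real.ofReal_le_enorm _).trans ((enorm_integral_le_lintegral_enorm f).trans h))

section CoveringTime

variable {α : Type*}

variable (α) in
def coveredBy (r : ℕ) : Set (ℕ → α) := {ω | ∀ a, ∃ j < r, ω j = a}

-- Since `sInf ∅ = 0`, a sequence that never covers `α` gets covering time `0`.
noncomputable def coveringTime (ω : ℕ → α) : ℕ := sInf {r | ω ∈ coveredBy α r}

theorem natCast_coveringTime_le_tsum_indicator (ω : ℕ → α) :
    (coveringTime ω : ℝ≥0∞) ≤ ∑' r, (coveredBy α r)ᶜ.indicator 1 ω := by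
  have huncovered {r} (hr : r < coveringTime ω) : ω ∈ (coveredBy α r)ᶜ :=
    fun hcov ↦ (Nat.sInf_le hcov).not_gt hr
  calc (coveringTime ω : ℝ≥0∞) = ∑ r ∈ range (coveringTime ω), 1 := by simp
    _ = ∑ r ∈ range (coveringTime ω), (coveredBy α r)ᶜ.indicator 1 ω :=
        sum_congr rfl fun r hr ↦ by simp [Set.indicator_of_mem (huncovered (mem_range.1 hr))]
    _ ≤ _ := ENNReal.sum_le_tsum _

theorem measurableSet_coveredBy [Countable α] [MeasurableSpace α] [MeasurableSingletonClass α]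
    (r : ℕ) : MeasurableSet (coveredBy α r) := by
  simp only [coveredBy]
  measurability

variable [Fintype α] [MeasurableSpace α]

def IsUniformSequence (μ : Measure (ℕ → α)) : Prop :=
  ∀ (s : Finset ℕ) (f : ℕ → α),
    μ {ω | ∀ j ∈ s, ω j = f j} = (Fintype.card α : ℝ≥0∞)⁻¹ ^ #s

namespace IsUniformSequence

variable {μ : Measure (ℕ → α)} [Nonempty α]

theorem isProbabilityMeasure (hμ : IsUniformSequence μ) : IsProbabilityMeasure μ :=
  ⟨by simpa using hμ ∅ fun _ ↦ Classical.arbitrary α⟩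

variable [MeasurableSingletonClass α]

theorem measure_forall_mem (hμ : IsUniformSequence μ) (s : Finset ℕ) (A : Finset α) :
    μ {ω | ∀ j ∈ s, ω j ∈ A} = (#A * (Fintype.card α : ℝ≥0∞)⁻¹) ^ #s := by
  classical
  let extend (g : s → α) (j : ℕ) : α := if h : j ∈ s then g ⟨j, h⟩ else Classical.arbitrary α
  let cylinder (g : s → α) : Set (ℕ → α) := {ω | ∀ j ∈ s, ω j = extend g j}
  have hunion : {ω | ∀ j ∈ s, ω j ∈ A} = ⋃ g ∈ Fintype.piFinset fun _ ↦ A, cylinder g := by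
    ext ω
    simp only [Set.mem_ofPred_eq, Set.mem_iUnion, Fintype.mem_piFinset, exists_prop, cylinder,
      extend]
    constructor
    · intro h
      exact ⟨fun j ↦ ω j, fun j ↦ h j j.2, fun j hj ↦ by simp [hj]⟩
    · rintro ⟨g, hgA, hωg⟩ j hj
      simpa [hωg j hj, hj] using hgA ⟨j, hj⟩
  have hdisj : ((Fintype.piFinset fun _ : s ↦ A : Finset (s → α)) : Set (s → α)).PairwiseDisjoint
      cylinder := by
    intro g _ g' _ hne
    refine Set.disjoint_left.2 fun ω hω hω' ↦ hne (funext fun j ↦ ?_)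
    simpa [extend, j.2] using (hω j j.2).symm.trans (hω' j j.2)
  rw [hunion, measure_biUnion_finset hdisj fun g _ ↦ by measurability]
  simp only [cylinder, hμ s, sum_const, Fintype.card_piFinset, prod_const, card_univ,
    Fintype.card_coe, nsmul_eq_mul, Nat.cast_pow, mul_pow]

theorem measure_compl_coveredBy_le (hμ : IsUniformSequence μ) (r : ℕ) :
    μ (coveredBy α r)ᶜ ≤ Fintype.card α * (1 - (Fintype.card α : ℝ≥0∞)⁻¹) ^ r := by
  classical
  have hmiss (a : α) : μ {ω | ∀ j < r, ω j ≠ a} = (1 - (Fintype.card α : ℝ≥0∞)⁻¹) ^ r := by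
    convert hμ.measure_forall_mem (range r) (univ.erase a) using 2
    · simp
    · rw [card_erase_of_mem (mem_univ a), card_univ, ENNReal.natCast_sub, Nat.cast_one,
        ENNReal.sub_mul (fun _ _ ↦ by simp), one_mul, ENNReal.mul_inv_cancel (by simp) (by simp)]
    · rw [card_range]
  calc μ (coveredBy α r)ᶜ
      ≤ μ (⋃ a, {ω | ∀ j < r, ω j ≠ a}) := measure_mono fun ω hω ↦ by simpa [coveredBy] using hω
    _ ≤ ∑ a, μ {ω | ∀ j < r, ω j ≠ a} := measure_iUnion_fintype_le μ _
    _ = Fintype.card α * (1 - (Fintype.card α : ℝ≥0∞)⁻¹) ^ r := by simp [hmiss]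

theorem lintegral_coveringTime_le (hμ : IsUniformSequence μ) {k : ℕ}
    (hk : Fintype.card α * (1 - (Fintype.card α : ℝ≥0∞)⁻¹) ^ k ≤ 1) :
    ∫⁻ ω, (coveringTime ω : ℝ≥0∞) ∂μ ≤ k + Fintype.card α := by
  have := hμ.isProbabilityMeasure
  have hsub : 1 - (1 - (Fintype.card α : ℝ≥0∞)⁻¹) = (Fintype.card α : ℝ≥0∞)⁻¹ :=
    ENNReal.sub_sub_cancel ENNReal.one_ne_top
      (ENNReal.inv_le_one.2 (by exact_mod_cast Fintype.card_pos))
  calc ∫⁻ ω, (coveringTime ω : ℝ≥0∞) ∂μ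
      ≤ ∫⁻ ω, ∑' r, (coveredBy α r)ᶜ.indicator 1 ω ∂μ :=
        lintegral_mono natCast_coveringTime_le_tsum_indicator
    _ = ∑' r, μ (coveredBy α r)ᶜ := by
        rw [lintegral_tsum fun r ↦
          (measurable_one.indicator (measurableSet_coveredBy r).compl).aemeasurable]
        exact tsum_congr fun r ↦ lintegral_indicator_one (measurableSet_coveredBy r).compl
    _ ≤ k + Fintype.card α * (1 - (Fintype.card α : ℝ≥0∞)⁻¹) ^ k *
          (1 - (1 - (Fintype.card α : ℝ≥0∞)⁻¹))⁻¹ :=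
        ENNReal.tsum_le_add_geometric (fun _ ↦ prob_le_one) hμ.measure_compl_coveredBy_le k
    _ ≤ k + Fintype.card α := by
        rw [hsub, inv_inv]
        gcongr
        exact mul_le_of_le_one_left (by positivity) hk

end IsUniformSequence

end CoveringTime

theorem stmt6_general (N : ℕ) (hN : 1 ≤ N)
    (μ : MeasureTheory.Measure (ℕ → Fin N))
    (hμ : ∀ (s : Finset ℕ) (f : ℕ → Fin N),
      μ {ω : ℕ → Fin N | ∀ j ∈ s, ω j = f j} = ((N : ENNReal)⁻¹) ^ s.card)
    (T : (ℕ → Fin N) → ℕ)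
    (hT : ∀ ω, T ω = sInf {r : ℕ | ∀ p : Fin N, ∃ j < r, ω j = p}) :
    ∫ ω, (T ω : ℝ) ∂μ ≤ (N : ℝ) * (1 + Real.log N) := by
  have : Nonempty (Fin N) := ⟨⟨0, hN⟩⟩
  have hunif : IsUniformSequence μ := by simpa [IsUniformSequence] using hμ
  obtain rfl : T = coveringTime := funext hT
  obtain ⟨k, hk_log, hk⟩ := exists_le_mul_log_and_mul_one_sub_inv_pow_le hN
  have hk' : (N : ℝ≥0∞) * (1 - (N : ℝ≥0∞)⁻¹) ^ k ≤ 1 := by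
    have hq : 0 ≤ 1 - (N : ℝ)⁻¹ := sub_nonneg.2 (inv_le_one_of_one_le₀ (by exact_mod_cast hN))
    have hN₀ : (0 : ℝ) < N := by exact_mod_cast hN
    simpa [ENNReal.ofReal_mul, ENNReal.ofReal_pow hq, ENNReal.ofReal_sub,
      ENNReal.ofReal_inv_of_pos hN₀] using ENNReal.ofReal_le_ofReal hk
  have hlog : 0 ≤ log N := log_natCast_nonneg N
  refine integral_le_of_lintegral_enorm_le (by positivity) ?_
  calc ∫⁻ ω, ‖(coveringTime ω : ℝ)‖ₑ ∂μ = ∫⁻ ω, (coveringTime ω : ℝ≥0∞) ∂μ := by simp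
    _ ≤ k + N := by simpa using hunif.lintegral_coveringTime_le (by simpa using hk')
    _ ≤ ENNReal.ofReal (N * (1 + log N)) := by
        rw [mul_one_add, add_comm, ENNReal.ofReal_add (by positivity) (by positivity),
          ENNReal.ofReal_natCast, ← ENNReal.ofReal_natCast k]
        gcongr

/-- Bound on the expected covering time (the paper's Eq. r2exp): with `μ` the infinite product
(over `ℕ`) of the uniform probability measure on `Fin N` and `T` the covering time,
`∫ T dμ ≤ N · (1 + log N)`. -/
theorem stmt6 (N : ℕ) (hN : 1 ≤ N)
    (μ : MeasureTheory.Measure (ℕ → Fin N)) [MeasureTheory.IsProbabilityMeasure μ]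
    (hμ : ∀ (s : Finset ℕ) (f : ℕ → Fin N),
      μ {ω : ℕ → Fin N | ∀ j ∈ s, ω j = f j} = ((N : ENNReal)⁻¹) ^ s.card)
    (T : (ℕ → Fin N) → ℕ)
    (hT : ∀ ω, T ω = sInf {r : ℕ | ∀ p : Fin N, ∃ j < r, ω j = p}) :
    ∫ ω, (T ω : ℝ) ∂μ ≤ (N : ℝ) * (1 + Real.log N) :=
  stmt6_general N hN μ hμ T hT
end

section
/- Let n ≥ 1 and let P : Matrix (Fin n) (Fin n) ℝ be row-stochastic (all entries nonnegative, every row sums to 1) and primitive, i.e., there exists k ≥ 1 such that every entry of P^k is strictly positive. Then every complex eigenvalue μ of the complex matrix P.map Complex.ofReal with μ ≠ 1 satisfies ‖μ‖ < 1. -/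
/-!
An eigenvector `v` of `P` for `μ` is an eigenvector of the positive stochastic matrix `P ^ k`
for `μ ^ k`. At a coordinate where `‖v‖` is maximal, the corresponding row of `P ^ k` averages
the entries of `v` with positive weights, so by strict convexity of the norm on `ℂ` we get
`‖μ ^ k‖ < 1` unless `v` is constant; and a constant eigenvector forces `μ = 1`, because the rows
of `P` sum to `1`.
-/

open Finset

namespace Matrix

variable {ι : Type*} [Fintype ι]

theorem exists_pow_mulVec_eq_smul_of_mem_spectrum {K : Type*} [Field K] [DecidableEq ι]
    {A : Matrix ι ι K} {μ : K} (hμ : μ ∈ spectrum K A) :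
    ∃ v ≠ 0, ∀ k : ℕ, (A ^ k) *ᵥ v = μ ^ k • v := by
  rw [← AlgEquiv.spectrum_eq toLinAlgEquiv', ← Module.End.hasEigenvalue_iff_mem_spectrum] at hμ
  obtain ⟨v, hv⟩ := hμ.exists_hasEigenvector
  refine ⟨v, hv.2, fun k => ?_⟩
  simpa [← toLinAlgEquiv'_apply] using hv.pow_apply k

theorem mulVec_const_of_sum_row_eq_one {R : Type*} [NonAssocSemiring R] {A : Matrix ι ι R}
    (hrow : ∀ i, ∑ j, A i j = 1) (c : R) : A *ᵥ (fun _ => c) = fun _ => c := by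
  ext i
  simp [mulVec, dotProduct, ← sum_mul, hrow]

theorem eq_one_of_mulVec_eq_smul_of_sum_row_eq_one {R : Type*} [Ring R] [IsDomain R]
    {A : Matrix ι ι R} (hrow : ∀ i, ∑ j, A i j = 1) {μ : R} {v : ι → R}
    (hv : A *ᵥ v = μ • v) (hv0 : v ≠ 0) (hconst : ∀ i j, v i = v j) : μ = 1 := by
  obtain ⟨i, hi⟩ := Function.ne_iff.mp hv0
  have hvi : v = fun _ => v i := funext fun j => hconst j i
  have h := congrFun hv i
  rw [hvi, mulVec_const_of_sum_row_eq_one hrow] at h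
  exact mul_right_cancel₀ hi (by simpa using h.symm)

theorem sum_pow_apply_eq_one [DecidableEq ι] {R : Type*} [Semiring R] {A : Matrix ι ι R}
    (hrow : ∀ i, ∑ j, A i j = 1) (k : ℕ) (i : ι) : ∑ j, (A ^ k) i j = 1 := by
  induction k generalizing i with
  | zero => simp [one_apply]
  | succ k ih =>
    simp only [pow_succ', mul_apply]
    rw [sum_comm]
    simp [← mul_sum, hrow, ih]

theorem norm_lt_one_of_mulVec_eq_smul_of_ne {B : Matrix ι ι ℝ} (hpos : ∀ i j, 0 < B i j)
    (hrow : ∀ i, ∑ j, B i j = 1) {μ : ℂ} {v : ι → ℂ} (hv : B.map (↑) *ᵥ v = μ • v) {i j : ι}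
    (hij : v i ≠ v j) : ‖μ‖ < 1 := by
  obtain ⟨i₀, -, hmax⟩ := exists_max_image univ (‖v ·‖) ⟨i, mem_univ i⟩
  have hM : 0 < ‖v i₀‖ := by
    by_contra! h
    have hzero : ∀ l, v l = 0 := fun l => norm_le_zero_iff.mp ((hmax l (mem_univ l)).trans h)
    exact hij (by rw [hzero i, hzero j])
  have hlt : ‖∑ l, B i₀ l • v l‖ < ‖v i₀‖ :=
    norm_sum_lt_of_strictConvexSpace (fun l _ => (hpos i₀ l).le) (hrow i₀) (mem_univ i)
      (mem_univ j) hij (hpos i₀ i).ne' (hpos i₀ j).ne' fun l _ => hmax l (mem_univ l)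
  have hrow_i₀ : ∑ l, B i₀ l • v l = μ * v i₀ := by
    simpa [mulVec, dotProduct, Complex.real_smul] using congrFun hv i₀
  rw [hrow_i₀, norm_mul] at hlt
  exact (mul_lt_iff_lt_one_left hM).mp hlt

end Matrix

open Matrix in
theorem stmt9_general (n : ℕ) (P : Matrix (Fin n) (Fin n) ℝ)
    (hrow : ∀ i, ∑ j, P i j = 1)
    (hprim : ∃ k : ℕ, 1 ≤ k ∧ ∀ i j, 0 < (P ^ k) i j) :
    ∀ μ : ℂ, μ ∈ spectrum ℂ (P.map Complex.ofReal) → μ ≠ 1 → ‖μ‖ < 1 := by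
  obtain ⟨k, hk, hpos⟩ := hprim
  intro μ hμ hμ1
  obtain ⟨v, hv0, hv⟩ := exists_pow_mulVec_eq_smul_of_mem_spectrum hμ
  by_cases hconst : ∀ i j, v i = v j
  · have hrowℂ : ∀ i, ∑ j, P.map Complex.ofReal i j = 1 := fun i => by
      simp [← Complex.ofReal_sum, hrow]
    refine absurd (eq_one_of_mulVec_eq_smul_of_sum_row_eq_one hrowℂ ?_ hv0 hconst) hμ1
    simpa using hv 1
  · push Not at hconst
    obtain ⟨i, j, hij⟩ := hconst
    have hvk : (P ^ k).map Complex.ofReal *ᵥ v = μ ^ k • v := by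
      convert hv k using 2
      exact P.map_pow Complex.ofRealHom k
    have hμk := norm_lt_one_of_mulVec_eq_smul_of_ne hpos (sum_pow_apply_eq_one hrow k) hvk hij
    rwa [norm_pow, pow_lt_one_iff_of_nonneg (norm_nonneg μ) (by omega)] at hμk

/-- Strict spectral gap for a primitive row-stochastic matrix `P` (nonnegative entries, rows
summing to 1, and some power `P^k`, `k ≥ 1`, entrywise strictly positive): every complex
eigenvalue `μ ≠ 1` of the complexified matrix satisfies `‖μ‖ < 1`. -/
theorem stmt9 (n : ℕ) (hn : 1 ≤ n) (P : Matrix (Fin n) (Fin n) ℝ)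
    (hnonneg : ∀ i j, 0 ≤ P i j) (hrow : ∀ i, ∑ j, P i j = 1)
    (hprim : ∃ k : ℕ, 1 ≤ k ∧ ∀ i j, 0 < (P ^ k) i j) :
    ∀ μ : ℂ, μ ∈ spectrum ℂ (P.map Complex.ofReal) → μ ≠ 1 → ‖μ‖ < 1 :=
  stmt9_general n P hrow hprim
end

section
/- Fix a natural number N ≥ 1, a real constant K ≥ 0, and a real number S with 0 ≤ S < 1. Define p(N,r) = ∑_{i=1}^{N} (−1)^{i+1} · (N choose i) · ((N−i)/N)^r. Then the sequence r ↦ (1 − p(N,r)) · K · S^r + p(N,r) tends to 0 as r → ∞. -/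
open scoped BigOperators

open Filter Topology

/-- `p(N,r)` as in the paper's Lemma. -/
noncomputable def pNr (N r : ℕ) : ℝ :=
  ∑ i ∈ Finset.Icc 1 N,
    (-1 : ℝ) ^ (i + 1) * (N.choose i : ℝ) * (((N - i : ℕ) : ℝ) / (N : ℝ)) ^ r

lemma natCast_sub_div_lt_one {N i : ℕ} (hi : 1 ≤ i) (hiN : i ≤ N) :
    ((N - i : ℕ) : ℝ) / N < 1 := by
  rw [div_lt_one (by exact_mod_cast hi.trans hiN)]
  exact_mod_cast Nat.sub_lt (by omega) hi

lemma tendsto_pNr_atTop (N : ℕ) : Tendsto (pNr N) atTop (𝓝 0) := by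
  rw [show (0 : ℝ) = ∑ _i ∈ Finset.Icc 1 N, (0 : ℝ) by simp]
  refine tendsto_finsetSum _ fun i hi => ?_
  obtain ⟨hi, hiN⟩ := Finset.mem_Icc.mp hi
  have hpow := tendsto_pow_atTop_nhds_zero_of_lt_one (by positivity) (natCast_sub_div_lt_one hi hiN)
  simpa using hpow.const_mul ((-1 : ℝ) ^ (i + 1) * (N.choose i : ℝ))

theorem stmt12_general (N : ℕ) (K S : ℝ) (hS0 : 0 ≤ S) (hS1 : S < 1) :
    Filter.Tendsto (fun r : ℕ => (1 - pNr N r) * K * S ^ r + pNr N r)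
      Filter.atTop (nhds 0) := by
  have hp := tendsto_pNr_atTop N
  have hS := tendsto_pow_atTop_nhds_zero_of_lt_one hS0 hS1
  simpa using (((tendsto_const_nhds (x := (1 : ℝ))).sub hp).mul_const K).mul hS |>.add hp

/-- The paper's privacy bound (Eq. adv): for `N ≥ 1`, `K ≥ 0` and `0 ≤ S < 1`, the adversary's
advantage bound `(1 − p(N,r)) · K · S^r + p(N,r)` tends to `0` as `r → ∞`. -/
theorem stmt12 (N : ℕ) (hN : 1 ≤ N) (K S : ℝ) (hK : 0 ≤ K) (hS0 : 0 ≤ S) (hS1 : S < 1) :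
    Filter.Tendsto (fun r : ℕ => (1 - pNr N r) * K * S ^ r + pNr N r)
      Filter.atTop (nhds 0) :=
  stmt12_general N K S hS0 hS1
end

section
/- For every natural number N ≥ 1, the series ∑_{r=0}^{∞} p(N,r) converges and its sum equals N · ∑_{k=1}^{N} 1/k, where p(N,r) = ∑_{i=1}^{N} (−1)^{i+1} · (N choose i) · ((N−i)/N)^r. -/
/-!
Writing `q i = (N - i) / N`, each summand of `p(N, r)` is geometric in `r`, so the series sums
termwise to `∑ i, (-1)^(i+1) C(N,i) · N / i`. The classical identity
`∑_{i=1}^{n} (-1)^(i+1) C(n,i) / i = H_n` follows by induction from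
`C(n+1,i)/i - C(n,i)/i = C(n+1,i)/(n+1)` and `∑_{i=1}^{n+1} (-1)^(i+1) C(n+1,i) = 1`.
-/

open Finset

theorem sum_Icc_one_alternating_choose {R : Type*} [CommRing R] {m : ℕ} (hm : m ≠ 0) :
    ∑ i ∈ Icc 1 m, (-1 : R) ^ (i + 1) * m.choose i = 1 := by
  have h := Int.alternating_sum_range_choose_of_ne hm
  rw [range_eq_Ico, sum_eq_sum_Ico_succ_bot (Nat.succ_pos m), zero_add,
    Nat.succ_eq_add_one, Ico_add_one_right_eq_Icc] at h
  have h' : ∑ i ∈ Icc 1 m, (-1 : ℤ) ^ (i + 1) * m.choose i = 1 := by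
    simp only [pow_succ, mul_neg_one, neg_mul, sum_neg_distrib]
    simp only [pow_zero, Nat.choose_zero_right, Nat.cast_one, mul_one] at h
    linarith
  exact_mod_cast congrArg (Int.cast : ℤ → R) h'

theorem choose_succ_div_sub_choose_div {K : Type*} [Field K] [CharZero K] (n k : ℕ) :
    ((n + 1).choose (k + 1) : K) / (k + 1) - n.choose (k + 1) / (k + 1)
      = (n + 1).choose (k + 1) / (n + 1) := by
  have hpascal : ((n + 1).choose (k + 1) : K) = n.choose k + n.choose (k + 1) := by
    exact_mod_cast Nat.choose_succ_succ n k
  have habsorb : ((n + 1 : ℕ) : K) * n.choose k = (n + 1).choose (k + 1) * (k + 1 : ℕ) := by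
    exact_mod_cast Nat.add_one_mul_choose_eq n k
  push_cast at habsorb
  rw [div_sub_div_same, div_eq_div_iff (Nat.cast_add_one_ne_zero k) (Nat.cast_add_one_ne_zero n)]
  linear_combination (n + 1 : K) * hpascal + habsorb

theorem sum_Icc_alternating_choose_div {K : Type*} [Field K] [CharZero K] (n : ℕ) :
    ∑ i ∈ Icc 1 n, (-1 : K) ^ (i + 1) * n.choose i / i = harmonic n := by
  induction n with
  | zero => simp
  | succ n ih =>
    have hsplit : ∀ i ∈ Icc 1 (n + 1), (-1 : K) ^ (i + 1) * (n + 1).choose i / i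
        = (-1 : K) ^ (i + 1) * n.choose i / i + (-1) ^ (i + 1) * (n + 1).choose i / (n + 1) := by
      intro i hi
      obtain ⟨k, rfl⟩ := Nat.exists_eq_add_of_le' (mem_Icc.mp hi).1
      have := choose_succ_div_sub_choose_div (K := K) n k
      push_cast at this ⊢
      linear_combination (-1 : K) ^ (k + 1 + 1) * this
    rw [sum_congr rfl hsplit, sum_add_distrib, ← sum_div,
      sum_Icc_one_alternating_choose (Nat.succ_ne_zero n), sum_Icc_succ_top (by omega), ih,
      Nat.choose_succ_self, harmonic_succ]
    push_cast
    ring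

theorem hasSum_geometric_sub_div {a b : ℝ} (ha : 0 < a) (hab : a ≤ b) :
    HasSum (fun r : ℕ => ((b - a) / b) ^ r) (b / a) := by
  have hb : 0 < b := ha.trans_le hab
  have h := hasSum_geometric_of_lt_one (div_nonneg (sub_nonneg.mpr hab) hb.le)
    ((div_lt_one hb).mpr (by linarith))
  rwa [one_sub_div hb.ne', sub_sub_cancel, inv_div] at h

theorem stmt13_general (N : ℕ) :
    HasSum
      (fun r : ℕ => ∑ i ∈ Finset.Icc 1 N,
        (-1 : ℝ) ^ (i + 1) * (N.choose i : ℝ) * (((N - i : ℕ) : ℝ) / (N : ℝ)) ^ r)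
      ((N : ℝ) * ∑ k ∈ Finset.Icc 1 N, (1 : ℝ) / (k : ℝ)) := by
  have hterm : ∀ i ∈ Icc 1 N,
      HasSum (fun r : ℕ => (-1 : ℝ) ^ (i + 1) * N.choose i * (((N - i : ℕ) : ℝ) / N) ^ r)
        ((-1 : ℝ) ^ (i + 1) * N.choose i * (N / i)) := by
    intro i hi
    obtain ⟨hi1, hiN⟩ := mem_Icc.mp hi
    rw [Nat.cast_sub hiN]
    exact (hasSum_geometric_sub_div (by positivity) (by exact_mod_cast hiN)).mul_left _
  have hharmonic : ∑ k ∈ Icc 1 N, (1 : ℝ) / k = harmonic N := by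
    simp [harmonic_eq_sum_Icc]
  convert hasSum_sum hterm using 1
  rw [hharmonic, ← sum_Icc_alternating_choose_div, mul_sum]
  exact sum_congr rfl fun i _ => by ring

/-- Summing the covering-time tail probabilities
`p(N,r) = ∑_{i=1}^{N} (−1)^{i+1} (N choose i) ((N−i)/N)^r` over all `r` gives the expected
covering time: `∑_{r=0}^{∞} p(N,r) = N · ∑_{k=1}^{N} 1/k` (in particular the series converges). -/
theorem stmt13 (N : ℕ) (hN : 1 ≤ N) :
    HasSum
      (fun r : ℕ => ∑ i ∈ Finset.Icc 1 N,
        (-1 : ℝ) ^ (i + 1) * (N.choose i : ℝ) * (((N - i : ℕ) : ℝ) / (N : ℝ)) ^ r)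
      ((N : ℝ) * ∑ k ∈ Finset.Icc 1 N, (1 : ℝ) / (k : ℝ)) :=
  stmt13_general N
end
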